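/- arXiv:1707.06063 — 8 statements merged into one kernel-verified Lean document; each statement's English description precedes it below -/
import Mathlib

section
/- If every client in a finite bipartite graph G = (C ∪ S, E) has at least one neighbor, and max over nonempty K ⊆ C of |K|/|N(K)| equals p/q, then there exists a nonnegative flow (x_e) on the edges such that every client c sends total flow 1 (∑_{s ∈ N(c)} x_{cs} = 1) and every server s receives total flow at most p/q (∑_{c ∈ N(s)} x_{cs} ≤ p/q). -/
open scoped Classical

/-- The neighborhood in `S` of a set of clients `K`, given adjacency `Adj`. -/
noncomputable def NB {C S : Type*} [Fintype S] (Adj : C → S → Prop) (K : Finset C) : Finset S :=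
  Finset.univ.filter fun s => ∃ c ∈ K, Adj c s

/-!
Replace every client by `q` copies and every server by `p` copies, a copy of `c` being adjacent
to every copy of each neighbor of `c`. A set of client copies projecting onto `K` has at most
`q |K| ≤ p |N(K)|` elements and sees `p |N(K)|` server copies, so Hall's theorem matches all
client copies injectively. Client `c` then sends to `s` the fraction of its copies matched to
copies of `s`; server `s` receives at most `p` copies, i.e. flow at most `p/q`.
-/

open Finset Function

section Blowup

variable {C S : Type*} [Fintype S] {Adj : C → S → Prop}

theorem NB_nonempty (hnb : ∀ c, ∃ s, Adj c s) {K : Finset C} (hK : K.Nonempty) :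
    (NB Adj K).Nonempty := by
  obtain ⟨c, hc⟩ := hK
  obtain ⟨s, hs⟩ := hnb c
  exact ⟨s, mem_filter.2 ⟨mem_univ s, c, hc, hs⟩⟩

theorem card_mul_le_card_NB_mul_of_isGreatest {p q : ℕ} (hq : 0 < q)
    (hnb : ∀ c, ∃ s, Adj c s)
    (hmax : IsGreatest {r : ℝ | ∃ K : Finset C, K.Nonempty ∧ r = (#K : ℝ) / (#(NB Adj K) : ℝ)}
      ((p : ℝ) / (q : ℝ)))
    (K : Finset C) : #K * q ≤ #(NB Adj K) * p := by
  rcases K.eq_empty_or_nonempty with rfl | hK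
  · simp
  have hratio : (#K : ℝ) / #(NB Adj K) ≤ p / q := hmax.2 ⟨K, hK, rfl⟩
  have hNB : (0 : ℝ) < #(NB Adj K) := by exact_mod_cast (NB_nonempty hnb hK).card_pos
  rw [div_le_div_iff₀ hNB (by exact_mod_cast hq), mul_comm (p : ℝ)] at hratio
  exact_mod_cast hratio

variable {ι κ : Type*} [Fintype κ]

/-- Neighbours of a client copy in the blown-up graph on `C × ι` and `S × κ`. -/
noncomputable def blowupNeighbors (Adj : C → S → Prop) (ci : C × ι) : Finset (S × κ) :=
  univ.filter (Adj ci.1) ×ˢ univ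

theorem biUnion_blowupNeighbors (A : Finset (C × ι)) :
    A.biUnion (blowupNeighbors (κ := κ) Adj) = NB Adj (A.image Prod.fst) ×ˢ univ := by
  ext ⟨s, j⟩
  simp [blowupNeighbors, NB, and_comm]

theorem exists_injective_blowup [Fintype ι]
    (hHall : ∀ K : Finset C, #K * Fintype.card ι ≤ #(NB Adj K) * Fintype.card κ) :
    ∃ f : C × ι → S × κ, Injective f ∧ ∀ ci, Adj ci.1 (f ci).1 := by
  have hall (A : Finset (C × ι)) : #A ≤ #(A.biUnion (blowupNeighbors (κ := κ) Adj)) :=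
    calc #A ≤ #(A.image Prod.fst ×ˢ (univ : Finset ι)) :=
          card_le_card fun ci hci => mem_product.2 ⟨mem_image_of_mem _ hci, mem_univ _⟩
      _ = #(A.image Prod.fst) * Fintype.card ι := by rw [card_product, card_univ]
      _ ≤ #(NB Adj (A.image Prod.fst)) * Fintype.card κ := hHall _
      _ = #(A.biUnion (blowupNeighbors Adj)) := by
          rw [biUnion_blowupNeighbors, card_product, card_univ]
  obtain ⟨f, hinj, hf⟩ := (all_card_le_biUnion_card_iff_exists_injective _).1 hall
  exact ⟨f, hinj, fun ci => (mem_filter.1 (mem_product.1 (hf ci)).1).2⟩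

end Blowup

section CopyFlow

variable {C S ι κ : Type*} [Fintype ι]

noncomputable def copyFlow (f : C × ι → S × κ) (c : C) (s : S) : ℝ :=
  #{i | (f (c, i)).1 = s} / Fintype.card ι

theorem copyFlow_nonneg (f : C × ι → S × κ) (c : C) (s : S) : 0 ≤ copyFlow f c s := by
  unfold copyFlow; positivity

theorem copyFlow_eq_zero {Adj : C → S → Prop} (f : C × ι → S × κ)
    (hf : ∀ ci, Adj ci.1 (f ci).1) {c : C} {s : S} (hcs : ¬ Adj c s) : copyFlow f c s = 0 := by
  have : ({i | (f (c, i)).1 = s} : Finset ι) = ∅ :=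
    filter_eq_empty_iff.2 fun i _ hi => hcs (hi ▸ hf (c, i))
  simp [copyFlow, this]

theorem sum_copyFlow_right [Fintype S] [Nonempty ι] (f : C × ι → S × κ) (c : C) :
    ∑ s, copyFlow f c s = 1 := by
  have hfib : ∑ s, #{i | (f (c, i)).1 = s} = Fintype.card ι :=
    (card_eq_sum_card_fiberwise fun i _ => mem_univ ((f (c, i)).1)).symm
  simp only [copyFlow, ← sum_div]
  rw [← Nat.cast_sum, hfib, div_self (by exact_mod_cast Fintype.card_ne_zero)]

theorem sum_copyFlow_left_le [Fintype C] [Fintype κ] (f : C × ι → S × κ) (hinj : Injective f)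
    (s : S) : ∑ c, copyFlow f c s ≤ Fintype.card κ / Fintype.card ι := by
  have hfib : ∑ c, #{i | (f (c, i)).1 = s} = #{ci : C × ι | (f ci).1 = s} := by
    rw [card_filter, Fintype.sum_prod_type]
    simp only [card_filter]
  -- the copies of `s` hit by `f` are told apart by their second coordinate
  have hcopies : #{ci : C × ι | (f ci).1 = s} ≤ Fintype.card κ := by
    refine card_le_card_of_injOn (fun ci => (f ci).2) (fun _ _ => mem_univ _) ?_
    intro a ha b hb hab
    simp only [coe_filter, mem_univ, true_and, Set.mem_ofPred_eq] at ha hb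
    exact hinj (Prod.ext (ha.trans hb.symm) hab)
  simp only [copyFlow, ← sum_div]
  gcongr
  exact_mod_cast hfib ▸ hcopies

end CopyFlow

/-- If every client has at least one neighbor and the maximum of `|K|/|N(K)|` over
nonempty `K ⊆ C` equals `p/q`, then there is a server flow (nonnegative values on edges,
each client sending total flow 1) in which every server receives at most `p/q`. -/
theorem stmt_0 {C S : Type*} [Fintype C] [Fintype S]
    (Adj : C → S → Prop) (p q : ℕ) (hq : 0 < q)
    (hnb : ∀ c : C, ∃ s, Adj c s)
    (hmax : IsGreatest
      {r : ℝ | ∃ K : Finset C, K.Nonempty ∧ r = (K.card : ℝ) / ((NB Adj K).card : ℝ)}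
      ((p : ℝ) / (q : ℝ))) :
    ∃ x : C → S → ℝ,
      (∀ c s, 0 ≤ x c s) ∧
      (∀ c s, ¬ Adj c s → x c s = 0) ∧
      (∀ c, ∑ s, x c s = 1) ∧
      (∀ s, ∑ c, x c s ≤ (p : ℝ) / (q : ℝ)) := by
  have hHall (K : Finset C) : #K * Fintype.card (Fin q) ≤ #(NB Adj K) * Fintype.card (Fin p) := by
    simpa using card_mul_le_card_NB_mul_of_isGreatest hq hnb hmax K
  obtain ⟨f, hinj, hf⟩ := exists_injective_blowup hHall
  have : Nonempty (Fin q) := ⟨⟨0, hq⟩⟩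
  refine ⟨copyFlow f, copyFlow_nonneg f, fun c s => copyFlow_eq_zero f hf,
    sum_copyFlow_right f, fun s => ?_⟩
  simpa using sum_copyFlow_left_le f hinj s
end

section
/- Let α be a balanced server flow, let α̂ = max_{s ∈ S} α(s), let Ŝ = {s ∈ S : α(s) = α̂}, and let K̂ = {c ∈ C : A(c) ∩ Ŝ ≠ ∅}. Then N(K̂) = Ŝ and |K̂| = α̂ · |Ŝ|. -/
open scoped Classical

/-- The load of server `s` under flow `x`. -/
def load {C S : Type*} [Fintype C] (x : C → S → ℝ) (s : S) : ℝ := ∑ c, x c s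

/-- `x` is a server flow: nonnegative, supported on edges, each client sends one unit. -/
def IsServerFlow {C S : Type*} [Fintype S] (Adj : C → S → Prop) (x : C → S → ℝ) : Prop :=
  (∀ c s, 0 ≤ x c s) ∧ (∀ c s, ¬ Adj c s → x c s = 0) ∧ (∀ c, ∑ s, x c s = 1)

/-- `x` is balanced: each client only sends flow to its minimum-load neighbors. -/
def IsBalanced {C S : Type*} [Fintype C] [Fintype S] (Adj : C → S → Prop)
    (x : C → S → ℝ) : Prop :=
  ∀ c s, 0 < x c s → ∀ s', Adj c s' → load x s ≤ load x s'

/-- The active neighbors `A(c)` of a client `c`: the minimum-load neighbors of `c`. -/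
noncomputable def activeN {C S : Type*} [Fintype C] [Fintype S] (Adj : C → S → Prop)
    (x : C → S → ℝ) (c : C) : Finset S :=
  Finset.univ.filter fun s => Adj c s ∧ ∀ s', Adj c s' → load x s ≤ load x s'

/-!
Every client sends flow only to its minimum-load neighbors, so a client with an active neighbor of
maximum load `α̂` sees load `α̂` on all of its neighbors, and all of its unit of flow goes into `Ŝ`.
Conversely, any client sending positive flow into `Ŝ` has an active neighbor there. Hence the flow
into `Ŝ` comes exactly from `K̂`, one unit per client, and counting it from the server side gives
`|K̂| = α̂ |Ŝ|`. Since `α̂ > 0`, each server of `Ŝ` receives flow from some client of `K̂`.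
-/

open Finset

section BalancedFlow

variable {C S : Type*} {Adj : C → S → Prop} {x : C → S → ℝ}

section ServerFlow

variable [Fintype S]

theorem IsServerFlow.nonneg (hflow : IsServerFlow Adj x) (c : C) (s : S) : 0 ≤ x c s :=
  hflow.1 c s

theorem IsServerFlow.adj_of_pos (hflow : IsServerFlow Adj x) {c : C} {s : S}
    (hpos : 0 < x c s) : Adj c s := by
  by_contra h
  exact hpos.ne' (hflow.2.1 c s h)

theorem IsServerFlow.sum_eq_one (hflow : IsServerFlow Adj x) (c : C) : ∑ s, x c s = 1 :=
  hflow.2.2 c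

end ServerFlow

variable [Fintype C] [Fintype S]

theorem sum_load_eq_card (hflow : IsServerFlow Adj x) : ∑ s, load x s = Fintype.card C := by
  simp only [load]
  rw [sum_comm]
  simp [hflow.sum_eq_one]

theorem IsServerFlow.pos_of_load_le [Nonempty C] (hflow : IsServerFlow Adj x) {a : ℝ}
    (hub : ∀ s, load x s ≤ a) : 0 < a := by
  by_contra! ha
  have hzero : ∀ s, load x s = 0 := fun s =>
    (hub s).trans ha |>.antisymm (sum_nonneg fun c _ => hflow.nonneg c s)
  have hcard := sum_load_eq_card hflow
  simp only [hzero, sum_const_zero] at hcard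
  exact Fintype.card_ne_zero (by exact_mod_cast hcard.symm)

theorem mem_activeN {c : C} {s : S} :
    s ∈ activeN Adj x c ↔ Adj c s ∧ ∀ s', Adj c s' → load x s ≤ load x s' := by
  simp [activeN]

theorem IsBalanced.mem_activeN_of_pos (hbal : IsBalanced Adj x) (hflow : IsServerFlow Adj x)
    {c : C} {s : S} (hpos : 0 < x c s) : s ∈ activeN Adj x c :=
  mem_activeN.2 ⟨hflow.adj_of_pos hpos, hbal c s hpos⟩

/-- The servers of load `a`; for `a = α̂` this is `Ŝ`. -/
noncomputable def topServers (x : C → S → ℝ) (a : ℝ) : Finset S :=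
  univ.filter fun s => load x s = a

/-- The clients with an active neighbor of load `a`; for `a = α̂` this is `K̂`. -/
noncomputable def topClients (Adj : C → S → Prop) (x : C → S → ℝ) (a : ℝ) : Finset C :=
  univ.filter fun c => (activeN Adj x c ∩ topServers x a).Nonempty

theorem mem_topServers {a : ℝ} {s : S} : s ∈ topServers x a ↔ load x s = a := by
  simp [topServers]

theorem mem_topClients {a : ℝ} {c : C} :
    c ∈ topClients Adj x a ↔ ∃ s ∈ activeN Adj x c, load x s = a := by
  simp [topClients, Finset.Nonempty, mem_topServers]

section MaxLoad

variable {a : ℝ}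

theorem load_eq_of_mem_topClients (hub : ∀ s, load x s ≤ a) {c : C}
    (hc : c ∈ topClients Adj x a) {s : S} (hadj : Adj c s) : load x s = a := by
  obtain ⟨s₀, hs₀, hload⟩ := mem_topClients.1 hc
  exact (hub s).antisymm (hload ▸ (mem_activeN.1 hs₀).2 s hadj)

theorem mem_topClients_of_pos (hflow : IsServerFlow Adj x) (hbal : IsBalanced Adj x)
    {c : C} {s : S} (hpos : 0 < x c s) (hs : load x s = a) : c ∈ topClients Adj x a :=
  mem_topClients.2 ⟨s, hbal.mem_activeN_of_pos hflow hpos, hs⟩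

theorem sum_flow_topServers (hflow : IsServerFlow Adj x) (hbal : IsBalanced Adj x)
    (hub : ∀ s, load x s ≤ a) (c : C) :
    ∑ s ∈ topServers x a, x c s = if c ∈ topClients Adj x a then 1 else 0 := by
  split_ifs with hc
  · rw [← hflow.sum_eq_one c]
    refine sum_subset (subset_univ _) fun s _ hs => ?_
    by_contra hne
    have hpos := (hflow.nonneg c s).lt_of_ne' hne
    exact hs (mem_topServers.2 (load_eq_of_mem_topClients hub hc (hflow.adj_of_pos hpos)))
  · refine sum_eq_zero fun s hs => ?_
    by_contra hne
    exact hc (mem_topClients_of_pos hflow hbal ((hflow.nonneg c s).lt_of_ne' hne)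
      (mem_topServers.1 hs))

theorem card_topClients (hflow : IsServerFlow Adj x) (hbal : IsBalanced Adj x)
    (hub : ∀ s, load x s ≤ a) :
    ((topClients Adj x a).card : ℝ) = a * (topServers x a).card :=
  calc ((topClients Adj x a).card : ℝ)
      = ∑ c, ∑ s ∈ topServers x a, x c s := by
        simp [sum_flow_topServers hflow hbal hub]
    _ = ∑ s ∈ topServers x a, load x s := sum_comm
    _ = a * (topServers x a).card := by
        rw [sum_congr rfl fun s hs => mem_topServers.1 hs, sum_const,
          nsmul_eq_mul, mul_comm]

theorem neighbors_topClients [Nonempty C] (hflow : IsServerFlow Adj x)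
    (hbal : IsBalanced Adj x) (hub : ∀ s, load x s ≤ a) :
    (univ.filter fun s => ∃ c ∈ topClients Adj x a, Adj c s) = topServers x a := by
  ext s
  simp only [mem_filter, mem_univ, true_and, mem_topServers]
  refine ⟨fun ⟨c, hc, hadj⟩ => load_eq_of_mem_topClients hub hc hadj, fun hs => ?_⟩
  have hload_pos : ∑ _c : C, (0 : ℝ) < ∑ c, x c s := by
    simpa [← hs, load] using hflow.pos_of_load_le hub
  obtain ⟨c, -, hpos⟩ := exists_lt_of_sum_lt hload_pos
  exact ⟨c, mem_topClients_of_pos hflow hbal hpos hs, hflow.adj_of_pos hpos⟩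

end MaxLoad

end BalancedFlow

theorem stmt_2_general {C S : Type*} [Fintype C] [Fintype S] [Nonempty C]
    (Adj : C → S → Prop) (x : C → S → ℝ)
    (hflow : IsServerFlow Adj x) (hbal : IsBalanced Adj x)
    (ahat : ℝ) (hub : ∀ s, load x s ≤ ahat)
    (Shat : Finset S) (hShat : Shat = Finset.univ.filter fun s => load x s = ahat)
    (Khat : Finset C)
    (hKhat : Khat = Finset.univ.filter fun c => (activeN Adj x c ∩ Shat).Nonempty) :
    (Finset.univ.filter fun s => ∃ c ∈ Khat, Adj c s) = Shat ∧
    (Khat.card : ℝ) = ahat * (Shat.card : ℝ) := by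
  subst hShat hKhat
  exact ⟨neighbors_topClients hflow hbal hub, card_topClients hflow hbal hub⟩

/-- Let `α̂` be the maximum server load of a balanced flow, `Ŝ` the servers attaining it,
and `K̂` the clients with an active neighbor in `Ŝ`. Then `N(K̂) = Ŝ` and `|K̂| = α̂·|Ŝ|`. -/
theorem stmt_2 {C S : Type*} [Fintype C] [Fintype S] [Nonempty C]
    (Adj : C → S → Prop) (x : C → S → ℝ)
    (hnb : ∀ c : C, ∃ s, Adj c s)
    (hflow : IsServerFlow Adj x) (hbal : IsBalanced Adj x)
    (ahat : ℝ) (hub : ∀ s, load x s ≤ ahat) (hatt : ∃ s, load x s = ahat)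
    (Shat : Finset S) (hShat : Shat = Finset.univ.filter fun s => load x s = ahat)
    (Khat : Finset C)
    (hKhat : Khat = Finset.univ.filter fun c => (activeN Adj x c ∩ Shat).Nonempty) :
    (Finset.univ.filter fun s => ∃ c ∈ Khat, Adj c s) = Shat ∧
    (Khat.card : ℝ) = ahat * (Shat.card : ℝ) :=
  stmt_2_general Adj x hflow hbal ahat hub Shat hShat Khat hKhat
end

section
/- Let α be a balanced server flow on G = (C ∪ S, E) and let α̂ = max_{s ∈ S} α(s). Then α̂ = max over nonempty K ⊆ C of |K|/|N(K)|. Furthermore, for any K ⊆ C with |K| = α̂ · |N(K)|, every server s ∈ N(K) satisfies α(s) = α̂. -/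
/-!
Summing loads over `N(K)` counts every unit sent by the clients of `K`, so
`|K| ≤ ∑_{s ∈ N(K)} α(s) ≤ α̂ · |N(K)|`, with equality forcing `α = α̂` on `N(K)`.
For the other inequality take the clients all of whose neighbours carry load `α̂`. By balance,
no other client sends flow into their neighbourhood, so its total load is exactly their number;
and they exist, since a server of load `α̂` (positive, as the loads sum to `|C|`) receives flow
from some client, all of whose neighbours then have load at least (hence exactly) `α̂`.
-/

open scoped Classical

open Finset

noncomputable def tightClients {C S : Type*} [Fintype C] [Fintype S] (Adj : C → S → Prop)
    (x : C → S → ℝ) (a : ℝ) : Finset C :=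
  univ.filter fun c => ∀ s, Adj c s → load x s = a

section

variable {C S : Type*} [Fintype S] {Adj : C → S → Prop} {x : C → S → ℝ} {a : ℝ}

lemma mem_NB {K : Finset C} {s : S} : s ∈ NB Adj K ↔ ∃ c ∈ K, Adj c s := by
  simp [NB]

lemma IsServerFlow.sum_NB_sum_eq_card (hflow : IsServerFlow Adj x) (K : Finset C) :
    ∑ s ∈ NB Adj K, ∑ c ∈ K, x c s = K.card := by
  rw [sum_comm, Finset.cast_card, ← sum_congr rfl fun c _ => hflow.2.2 c]
  refine sum_congr rfl fun c hc => sum_subset (subset_univ _) fun s _ hs => ?_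
  exact hflow.2.1 c s fun hadj => hs (mem_NB.2 ⟨c, hc, hadj⟩)

variable [Fintype C]

lemma mem_tightClients {c : C} : c ∈ tightClients Adj x a ↔ ∀ s, Adj c s → load x s = a := by
  simp [tightClients]

namespace IsServerFlow

lemma sum_load (hflow : IsServerFlow Adj x) : ∑ s, load x s = Fintype.card C := by
  simp only [load]
  rw [sum_comm]
  simp [hflow.2.2]

lemma exists_load_pos [Nonempty C] (hflow : IsServerFlow Adj x) : ∃ s, 0 < load x s := by
  have hsum : ∑ _s : S, (0 : ℝ) < ∑ s, load x s := by
    rw [hflow.sum_load, sum_const_zero]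
    exact_mod_cast Fintype.card_pos
  obtain ⟨s, -, hs⟩ := exists_lt_of_sum_lt hsum
  exact ⟨s, hs⟩

lemma card_le_sum_load_NB (hflow : IsServerFlow Adj x) (K : Finset C) :
    (K.card : ℝ) ≤ ∑ s ∈ NB Adj K, load x s := by
  rw [← hflow.sum_NB_sum_eq_card K]
  exact sum_le_sum fun s _ =>
    sum_le_sum_of_subset_of_nonneg (subset_univ K) fun c _ _ => hflow.1 c s

lemma card_le_mul_card_NB (hflow : IsServerFlow Adj x) (hub : ∀ s, load x s ≤ a)
    (K : Finset C) : (K.card : ℝ) ≤ a * (NB Adj K).card :=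
  calc (K.card : ℝ) ≤ ∑ s ∈ NB Adj K, load x s := hflow.card_le_sum_load_NB K
    _ ≤ ∑ _s ∈ NB Adj K, a := sum_le_sum fun s _ => hub s
    _ = a * (NB Adj K).card := by rw [sum_const, nsmul_eq_mul, mul_comm]

lemma load_eq_of_card_eq_mul_card_NB (hflow : IsServerFlow Adj x) (hub : ∀ s, load x s ≤ a)
    {K : Finset C} (hK : (K.card : ℝ) = a * (NB Adj K).card) :
    ∀ s ∈ NB Adj K, load x s = a := by
  have hgap : ∑ s ∈ NB Adj K, (a - load x s) ≤ 0 := by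
    rw [sum_sub_distrib, sum_const, nsmul_eq_mul, mul_comm, ← hK]
    linarith [hflow.card_le_sum_load_NB K]
  intro s hs
  have := (sum_eq_zero_iff_of_nonneg fun s _ => sub_nonneg.2 (hub s)).1
    (hgap.antisymm (sum_nonneg fun s _ => sub_nonneg.2 (hub s))) s hs
  linarith

end IsServerFlow

lemma load_eq_of_mem_NB_tightClients {s : S} (hs : s ∈ NB Adj (tightClients Adj x a)) :
    load x s = a := by
  obtain ⟨c, hc, hadj⟩ := mem_NB.1 hs
  exact mem_tightClients.1 hc s hadj

namespace IsBalanced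

lemma mem_tightClients_of_pos (hbal : IsBalanced Adj x) (hub : ∀ s, load x s ≤ a) {c : C}
    {s : S} (hpos : 0 < x c s) (hs : load x s = a) : c ∈ tightClients Adj x a :=
  mem_tightClients.2 fun s' hs' => (hub s').antisymm (hs ▸ hbal c s hpos s' hs')

lemma eq_zero_of_mem_NB_tightClients (hbal : IsBalanced Adj x) (hflow : IsServerFlow Adj x)
    (hub : ∀ s, load x s ≤ a) {c : C} {s : S} (hs : s ∈ NB Adj (tightClients Adj x a))
    (hc : c ∉ tightClients Adj x a) : x c s = 0 := by
  by_contra hne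
  exact hc (hbal.mem_tightClients_of_pos hub ((hflow.1 c s).lt_of_ne' hne)
    (load_eq_of_mem_NB_tightClients hs))

lemma tightClients_nonempty (hbal : IsBalanced Adj x)
    (hub : ∀ s, load x s ≤ a) (ha : 0 < a) {s : S} (hs : load x s = a) :
    (tightClients Adj x a).Nonempty := by
  have hsum : ∑ _c : C, (0 : ℝ) < ∑ c, x c s := by
    rw [sum_const_zero]
    exact ha.trans_eq hs.symm
  obtain ⟨c, -, hc⟩ := exists_lt_of_sum_lt hsum
  exact ⟨c, hbal.mem_tightClients_of_pos hub hc hs⟩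

lemma card_tightClients_eq_mul (hflow : IsServerFlow Adj x) (hbal : IsBalanced Adj x)
    (hub : ∀ s, load x s ≤ a) :
    ((tightClients Adj x a).card : ℝ) = a * (NB Adj (tightClients Adj x a)).card := by
  set T := tightClients Adj x a
  have honly : ∀ s ∈ NB Adj T, load x s = ∑ c ∈ T, x c s := fun s hs =>
    (sum_subset (subset_univ T) fun c _ hc =>
      hbal.eq_zero_of_mem_NB_tightClients hflow hub hs hc).symm
  calc (T.card : ℝ) = ∑ s ∈ NB Adj T, load x s := by
        rw [← hflow.sum_NB_sum_eq_card T]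
        exact (sum_congr rfl honly).symm
    _ = ∑ _s ∈ NB Adj T, a := sum_congr rfl fun s hs => load_eq_of_mem_NB_tightClients hs
    _ = a * (NB Adj T).card := by rw [sum_const, nsmul_eq_mul, mul_comm]

end IsBalanced

end

theorem stmt_3_general {C S : Type*} [Fintype C] [Fintype S] [Nonempty C]
    (Adj : C → S → Prop) (x : C → S → ℝ)
    (hflow : IsServerFlow Adj x) (hbal : IsBalanced Adj x)
    (ahat : ℝ) (hub : ∀ s, load x s ≤ ahat) (hatt : ∃ s, load x s = ahat) :
    IsGreatest
      {r : ℝ | ∃ K : Finset C, K.Nonempty ∧ r = (K.card : ℝ) / ((NB Adj K).card : ℝ)}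
      ahat ∧
    ∀ K : Finset C, (K.card : ℝ) = ahat * ((NB Adj K).card : ℝ) →
      ∀ s ∈ NB Adj K, load x s = ahat := by
  obtain ⟨s₀, hs₀⟩ := hatt
  obtain ⟨s₁, hs₁⟩ := hflow.exists_load_pos
  have ha : 0 < ahat := hs₁.trans_le (hub s₁)
  have hT := hbal.tightClients_nonempty hub ha hs₀
  have hTcard := hbal.card_tightClients_eq_mul hflow hub
  refine ⟨⟨⟨tightClients Adj x ahat, hT, ?_⟩, ?_⟩,
    fun K hK => hflow.load_eq_of_card_eq_mul_card_NB hub hK⟩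
  · refine (eq_div_iff fun h => ?_).2 hTcard.symm
    rw [h, mul_zero, Nat.cast_eq_zero, card_eq_zero] at hTcard
    exact hT.ne_empty hTcard
  · rintro r ⟨K, -, rfl⟩
    exact div_le_of_le_mul₀ (Nat.cast_nonneg _) ha.le (hflow.card_le_mul_card_NB hub K)

/-- The maximum load `α̂` of a balanced server flow equals the maximum of `|K|/|N(K)|`
over nonempty `K ⊆ C`; moreover any `K` with `|K| = α̂·|N(K)|` has `α(s) = α̂` for all
`s ∈ N(K)`. -/
theorem stmt_3 {C S : Type*} [Fintype C] [Fintype S] [Nonempty C]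
    (Adj : C → S → Prop) (x : C → S → ℝ)
    (hnb : ∀ c : C, ∃ s, Adj c s)
    (hflow : IsServerFlow Adj x) (hbal : IsBalanced Adj x)
    (ahat : ℝ) (hub : ∀ s, load x s ≤ ahat) (hatt : ∃ s, load x s = ahat) :
    IsGreatest
      {r : ℝ | ∃ K : Finset C, K.Nonempty ∧ r = (K.card : ℝ) / ((NB Adj K).card : ℝ)}
      ahat ∧
    ∀ K : Finset C, (K.card : ℝ) = ahat * ((NB Adj K).card : ℝ) →
      ∀ s ∈ NB Adj K, load x s = ahat :=
  stmt_3_general Adj x hflow hbal ahat hub hatt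
end

section
/- A finite bipartite graph G = (C ∪ S, E) admits a balanced server flow with uniquely determined server loads α if and only if every client has at least one neighbor. -/
open scoped Classical

/-!
Consider the potential `Φ x = ∑ s, (load x s)²` on server flows. If every client has a
neighbour, the server flows form a nonempty compact set, so `Φ` attains its minimum; a minimizer
is balanced, because moving `ε` units of a client's flow from a server
`s` to a less loaded neighbour `s'` changes `Φ` by `2ε (load s' - load s + ε) < 0` for small `ε`.
For uniqueness, a balanced `x` satisfies `⟪load x, load y - load x⟫ ≥ 0` for every flow `y`;
adding this to the same inequality with `x` and `y` swapped gives `‖load x - load y‖² ≤ 0`.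
-/

section

variable {C S : Type*} [Fintype S] {Adj : C → S → Prop} {x : C → S → ℝ}

theorem IsServerFlow.exists_adj (hx : IsServerFlow Adj x) (c : C) : ∃ s, Adj c s := by
  by_contra! h
  have h0 : ∑ s, x c s = 0 := Finset.sum_eq_zero fun s _ => hx.2.1 c s (h s)
  simp [hx.2.2 c] at h0

theorem IsServerFlow.le_one (hx : IsServerFlow Adj x) (c : C) (s : S) : x c s ≤ 1 :=
  hx.2.2 c ▸ Finset.single_le_sum (fun t _ => hx.1 c t) (Finset.mem_univ s)

theorem exists_isServerFlow (h : ∀ c, ∃ s, Adj c s) : ∃ x : C → S → ℝ, IsServerFlow Adj x := by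
  choose f hf using h
  refine ⟨fun c => Pi.single (f c) 1, fun c s => ?_, fun c s hs => ?_, fun c => ?_⟩
  · by_cases hs : s = f c <;> simp [hs]
  · exact Pi.single_eq_of_ne (by rintro rfl; exact hs (hf c)) 1
  · simp

theorem isClosed_setOf_isServerFlow (Adj : C → S → Prop) :
    IsClosed {x : C → S → ℝ | IsServerFlow Adj x} := by
  simp only [IsServerFlow, Set.ofPred_and, Set.ofPred_forall]
  refine .inter ?_ (.inter ?_ ?_)
  · exact isClosed_iInter fun c => isClosed_iInter fun s => isClosed_le (by fun_prop) (by fun_prop)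
  · exact isClosed_iInter fun c => isClosed_iInter fun s => isClosed_iInter fun _ =>
      isClosed_eq (by fun_prop) (by fun_prop)
  · exact isClosed_iInter fun c => isClosed_eq (by fun_prop) (by fun_prop)

theorem isCompact_setOf_isServerFlow [Finite C] (Adj : C → S → Prop) :
    IsCompact {x : C → S → ℝ | IsServerFlow Adj x} :=
  isCompact_Icc.of_isClosed_subset (isClosed_setOf_isServerFlow Adj) fun _ hx =>
    ⟨fun c s => hx.1 c s, fun c s => hx.le_one c s⟩

end

section

variable {C S : Type*} [Fintype C] [Fintype S] {Adj : C → S → Prop} {x y : C → S → ℝ}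

omit [Fintype S] in
theorem load_add_single (x : C → S → ℝ) (c : C) (d : S → ℝ) (t : S) :
    load (x + Pi.single c d) t = load x t + d t := by
  simp [load, Finset.sum_add_distrib, ← Finset.sum_apply, Finset.sum_pi_single']

omit [Fintype C] in
theorem IsServerFlow.add_single (hx : IsServerFlow Adj x) {c : C} {d : S → ℝ}
    (hnonneg : ∀ t, 0 ≤ x c t + d t) (hsupp : ∀ t, ¬ Adj c t → d t = 0) (hsum : ∑ t, d t = 0) :
    IsServerFlow Adj (x + Pi.single c d) := by
  refine ⟨fun c' t => ?_, fun c' t ht => ?_, fun c' => ?_⟩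
  · rcases eq_or_ne c' c with rfl | hc
    · simpa using hnonneg t
    · simpa [hc] using hx.1 c' t
  · rcases eq_or_ne c' c with rfl | hc
    · simp [hx.2.1 c' t ht, hsupp t ht]
    · simpa [hc] using hx.2.1 c' t ht
  · rcases eq_or_ne c' c with rfl | hc
    · simp [Finset.sum_add_distrib, hx.2.2 c', hsum]
    · simpa [hc] using hx.2.2 c'

noncomputable def potential (x : C → S → ℝ) : ℝ := ∑ s, load x s ^ 2

theorem continuous_potential : Continuous (potential : (C → S → ℝ) → ℝ) := by
  unfold potential load; fun_prop

theorem potential_add_single (x : C → S → ℝ) (c : C) (d : S → ℝ) :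
    potential (x + Pi.single c d) = potential x + ∑ t, d t * (2 * load x t + d t) := by
  simp only [potential, load_add_single, ← Finset.sum_add_distrib]
  exact Finset.sum_congr rfl fun t _ => by ring

theorem potential_transfer (x : C → S → ℝ) (c : C) {s s' : S} (hss' : s ≠ s') (ε : ℝ) :
    potential (x + Pi.single c (Pi.single s' ε - Pi.single s ε)) =
      potential x + 2 * ε * (load x s' - load x s + ε) := by
  rw [potential_add_single, Fintype.sum_eq_add s s' hss' fun t ht => by simp [ht.1, ht.2]]
  simp only [Pi.sub_apply, Pi.single_eq_same, Pi.single_eq_of_ne hss', Pi.single_eq_of_ne hss'.symm,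
    zero_sub, sub_zero, neg_mul, add_right_inj]
  ring

theorem IsBalanced.of_isMinOn (hx : IsServerFlow Adj x)
    (hmin : IsMinOn potential {y | IsServerFlow Adj y} x) : IsBalanced Adj x := by
  intro c s hpos s' hs'
  by_contra! hlt
  have hss' : s ≠ s' := by rintro rfl; exact lt_irrefl _ hlt
  have hs : Adj c s := by_contra fun h => hpos.ne' (hx.2.1 c s h)
  set ε := min (x c s) ((load x s - load x s') / 2)
  have hε : 0 < ε := lt_min hpos (by linarith)
  have hflow : IsServerFlow Adj (x + Pi.single c (Pi.single s' ε - Pi.single s ε)) := by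
    refine hx.add_single (fun t => ?_) (fun t ht => ?_) ?_
    · rcases eq_or_ne t s with rfl | hts
      · simp only [Pi.sub_apply, Pi.single_eq_of_ne hss', Pi.single_eq_same, zero_sub,
          le_add_neg_iff_add_le, zero_add]
        exact min_le_left _ _
      · have := hx.1 c t
        rcases eq_or_ne t s' with rfl | hts'
        · simp only [Pi.sub_apply, Pi.single_eq_same, Pi.single_eq_of_ne hts, sub_zero]
          linarith
        · simpa [hts, hts']
    · have hts : t ≠ s := by rintro rfl; exact ht hs
      have hts' : t ≠ s' := by rintro rfl; exact ht hs'
      simp [hts, hts']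
    · simp
  have := hmin hflow
  simp only [Set.mem_ofPred_eq, potential_transfer x c hss'] at this
  nlinarith [min_le_right (x c s) ((load x s - load x s') / 2)]

theorem exists_isBalanced (h : ∀ c, ∃ s, Adj c s) :
    ∃ x : C → S → ℝ, IsServerFlow Adj x ∧ IsBalanced Adj x := by
  obtain ⟨x₀, hx₀⟩ := exists_isServerFlow h
  obtain ⟨x, hx, hmin⟩ :=
    (isCompact_setOf_isServerFlow Adj).exists_isMinOn ⟨x₀, hx₀⟩ continuous_potential.continuousOn
  exact ⟨x, hx, .of_isMinOn hx hmin⟩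

theorem sum_mul_load (w : S → ℝ) (x : C → S → ℝ) :
    ∑ s, w s * load x s = ∑ c, ∑ s, w s * x c s := by
  simp only [load, Finset.mul_sum]
  exact Finset.sum_comm

theorem IsBalanced.sum_load_mul_le_of_adj (hx : IsServerFlow Adj x) (hb : IsBalanced Adj x)
    {c : C} {s' : S} (hs' : Adj c s') : ∑ s, load x s * x c s ≤ load x s' :=
  calc ∑ s, load x s * x c s ≤ ∑ s, load x s' * x c s := by
        refine Finset.sum_le_sum fun s _ => ?_
        rcases (hx.1 c s).lt_or_eq with h | h
        · exact mul_le_mul_of_nonneg_right (hb c s h s' hs') h.le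
        · simp [← h]
    _ = load x s' := by rw [← Finset.mul_sum, hx.2.2 c, mul_one]

theorem IsBalanced.sum_load_mul_le (hx : IsServerFlow Adj x) (hb : IsBalanced Adj x)
    (hy : IsServerFlow Adj y) : ∑ s, load x s * load x s ≤ ∑ s, load x s * load y s := by
  have hclient (c : C) : ∑ s, load x s * x c s ≤ ∑ s, load x s * y c s :=
    calc ∑ s, load x s * x c s = ∑ s, (∑ t, load x t * x c t) * y c s := by
          rw [← Finset.mul_sum, hy.2.2 c, mul_one]
      _ ≤ ∑ s, load x s * y c s := by
          refine Finset.sum_le_sum fun s _ => ?_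
          by_cases hs : Adj c s
          · exact mul_le_mul_of_nonneg_right (hb.sum_load_mul_le_of_adj hx hs) (hy.1 c s)
          · simp [hy.2.1 c s hs]
  rw [sum_mul_load, sum_mul_load]
  exact Finset.sum_le_sum fun c _ => hclient c

theorem IsBalanced.load_eq (hx : IsServerFlow Adj x) (hbx : IsBalanced Adj x)
    (hy : IsServerFlow Adj y) (hby : IsBalanced Adj y) (s : S) : load x s = load y s := by
  have hxy := hbx.sum_load_mul_le hx hy
  have hyx := hby.sum_load_mul_le hy hx
  have hsq : ∑ t, (load x t - load y t) ^ 2 = 0 := by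
    refine le_antisymm ?_ (Finset.sum_nonneg fun t _ => sq_nonneg _)
    calc ∑ t, (load x t - load y t) ^ 2
        = ∑ t, load x t * load x t - ∑ t, load x t * load y t
          + (∑ t, load y t * load y t - ∑ t, load y t * load x t) := by
          simp only [← Finset.sum_sub_distrib, ← Finset.sum_add_distrib]
          exact Finset.sum_congr rfl fun t _ => by ring
      _ ≤ 0 := by linarith
  have := (Finset.sum_eq_zero_iff_of_nonneg fun t _ => sq_nonneg _).mp hsq s (Finset.mem_univ s)
  exact sub_eq_zero.mp (pow_eq_zero_iff two_ne_zero |>.mp this)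

end

/-- A finite bipartite graph admits a balanced server flow with uniquely determined
server loads if and only if every client has at least one neighbor. -/
theorem stmt_5 {C S : Type*} [Fintype C] [Fintype S]
    (Adj : C → S → Prop) :
    ((∃ x : C → S → ℝ, IsServerFlow Adj x ∧ IsBalanced Adj x) ∧
     (∀ x y : C → S → ℝ, IsServerFlow Adj x → IsBalanced Adj x →
        IsServerFlow Adj y → IsBalanced Adj y → ∀ s, load x s = load y s))
    ↔ (∀ c : C, ∃ s, Adj c s) :=
  ⟨fun ⟨⟨_, hx, _⟩, _⟩ => hx.exists_adj,
    fun h => ⟨exists_isBalanced h, fun _ _ hx hbx hy hby => hbx.load_eq hx hy hby⟩⟩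
end

section
/- Any balanced server flow minimizes the sum of squared server loads ∑_{s ∈ S} α(s)² among all server flows; consequently the load vector of a balanced server flow is unique. -/
open scoped Classical

/-!
If `x` is balanced, each client sends its unit of flow to servers of one common load `m_c`, the
minimum over its neighbours; any other flow `x*` routes that unit to servers of load `≥ m_c`.
Summing over clients gives `‖α‖² ≤ α · α*` for the load vectors `α` of `x` and `α*` of `x*`,
and expanding `‖α - α*‖² ≥ 0` yields `‖α‖ ≤ ‖α*‖`; for two balanced flows the inequality holds
in both directions, which forces `‖α - α*‖ = 0`.
-/

open Finset

theorem sum_sub_sq_eq {ι : Type*} [Fintype ι] (a b : ι → ℝ) :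
    ∑ i, (a i - b i) ^ 2 = ∑ i, a i ^ 2 - 2 * ∑ i, a i * b i + ∑ i, b i ^ 2 := by
  simp only [sub_sq, sum_add_distrib, sum_sub_distrib, mul_sum, mul_assoc]

theorem sum_sq_le_of_sum_sq_le_sum_mul {ι : Type*} [Fintype ι] {a b : ι → ℝ}
    (h : ∑ i, a i ^ 2 ≤ ∑ i, a i * b i) : ∑ i, a i ^ 2 ≤ ∑ i, b i ^ 2 := by
  have : 0 ≤ ∑ i, (a i - b i) ^ 2 := sum_nonneg fun i _ => sq_nonneg _
  rw [sum_sub_sq_eq] at this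
  linarith

theorem eq_of_sum_sq_le_sum_mul {ι : Type*} [Fintype ι] {a b : ι → ℝ}
    (hab : ∑ i, a i ^ 2 ≤ ∑ i, a i * b i) (hba : ∑ i, b i ^ 2 ≤ ∑ i, b i * a i) : a = b := by
  have hnonneg : ∀ i ∈ univ, 0 ≤ (a i - b i) ^ 2 := fun i _ => sq_nonneg _
  have hsum : ∑ i, (a i - b i) ^ 2 = 0 := by
    refine le_antisymm ?_ (sum_nonneg hnonneg)
    simp only [mul_comm (b _) (a _)] at hba
    rw [sum_sub_sq_eq]
    linarith
  funext i
  have := (sum_eq_zero_iff_of_nonneg hnonneg).mp hsum i (mem_univ i)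
  rwa [sq_eq_zero_iff, sub_eq_zero] at this

section

variable {C S : Type*} [Fintype S] {Adj : C → S → Prop} {x y : C → S → ℝ}

namespace IsServerFlow

theorem adj_of_pos_s7 (hx : IsServerFlow Adj x) {c : C} {s : S} (h : 0 < x c s) : Adj c s := by
  by_contra hn
  exact h.ne' (hx.2.1 c s hn)

theorem exists_pos (hx : IsServerFlow Adj x) (c : C) : ∃ s, 0 < x c s := by
  by_contra! h
  have := sum_nonpos fun s (_ : s ∈ univ) => h s
  linarith [hx.2.2 c]

theorem sum_mul_eq_of_pos (hx : IsServerFlow Adj x) {c : C} {f : S → ℝ} {m : ℝ}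
    (hf : ∀ s, 0 < x c s → f s = m) : ∑ s, x c s * f s = m := by
  calc ∑ s, x c s * f s = ∑ s, x c s * m := sum_congr rfl fun s _ => by
        rcases (hx.1 c s).eq_or_lt with h | h
        · rw [← h, zero_mul, zero_mul]
        · rw [hf s h]
    _ = m := by rw [← sum_mul, hx.2.2 c, one_mul]

theorem le_sum_mul (hx : IsServerFlow Adj x) {c : C} {f : S → ℝ} {m : ℝ}
    (hf : ∀ s, Adj c s → m ≤ f s) : m ≤ ∑ s, x c s * f s := by
  calc m = ∑ s, x c s * m := by rw [← sum_mul, hx.2.2 c, one_mul]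
    _ ≤ ∑ s, x c s * f s := sum_le_sum fun s _ => by
        rcases (hx.1 c s).eq_or_lt with h | h
        · rw [← h, zero_mul, zero_mul]
        · exact mul_le_mul_of_nonneg_left (hf s (hx.adj_of_pos_s7 h)) h.le

end IsServerFlow

variable [Fintype C]

theorem sum_load_mul (y : C → S → ℝ) (f : S → ℝ) :
    ∑ s, load y s * f s = ∑ c, ∑ s, y c s * f s := by
  simp only [load, sum_mul]
  exact sum_comm

namespace IsBalanced

theorem exists_active_level (hbal : IsBalanced Adj x) (hx : IsServerFlow Adj x) (c : C) :
    ∃ m, (∀ s, 0 < x c s → load x s = m) ∧ ∀ s, Adj c s → m ≤ load x s := by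
  obtain ⟨s₀, hs₀⟩ := hx.exists_pos c
  exact ⟨load x s₀, fun s hs => le_antisymm (hbal c s hs s₀ (hx.adj_of_pos_s7 hs₀))
    (hbal c s₀ hs₀ s (hx.adj_of_pos_s7 hs)), hbal c s₀ hs₀⟩

theorem sum_sq_load_le_sum_load_mul (hbal : IsBalanced Adj x) (hx : IsServerFlow Adj x)
    (hy : IsServerFlow Adj y) : ∑ s, load x s ^ 2 ≤ ∑ s, load x s * load y s := by
  simp only [sq, mul_comm (load x _) (load y _), sum_load_mul]
  refine sum_le_sum fun c _ => ?_
  obtain ⟨m, hactive, hmin⟩ := hbal.exists_active_level hx c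
  rw [hx.sum_mul_eq_of_pos hactive]
  exact hy.le_sum_mul hmin

end IsBalanced

end

theorem stmt_7_general {C S : Type*} [Fintype C] [Fintype S]
    (Adj : C → S → Prop)
    (x : C → S → ℝ)
    (hflow : IsServerFlow Adj x) (hbal : IsBalanced Adj x) :
    (∀ xstar : C → S → ℝ, IsServerFlow Adj xstar →
      ∑ s, (load x s) ^ 2 ≤ ∑ s, (load xstar s) ^ 2) ∧
    (∀ y : C → S → ℝ, IsServerFlow Adj y → IsBalanced Adj y →
      ∀ s, load x s = load y s) :=
  ⟨fun _ hstar => sum_sq_le_of_sum_sq_le_sum_mul (hbal.sum_sq_load_le_sum_load_mul hflow hstar),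
    fun _ hy hbaly => congrFun (eq_of_sum_sq_le_sum_mul
      (hbal.sum_sq_load_le_sum_load_mul hflow hy) (hbaly.sum_sq_load_le_sum_load_mul hy hflow))⟩

/-- Any balanced server flow minimizes `∑ α(s)²` among all server flows; consequently
any two balanced server flows have the same load vector. -/
theorem stmt_7 {C S : Type*} [Fintype C] [Fintype S]
    (Adj : C → S → Prop)
    (hnb : ∀ c : C, ∃ s, Adj c s)
    (x : C → S → ℝ)
    (hflow : IsServerFlow Adj x) (hbal : IsBalanced Adj x) :
    (∀ xstar : C → S → ℝ, IsServerFlow Adj xstar →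
      ∑ s, (load x s) ^ 2 ≤ ∑ s, (load xstar s) ^ 2) ∧
    (∀ y : C → S → ℝ, IsServerFlow Adj y → IsBalanced Adj y →
      ∀ s, load x s = load y s) :=
  stmt_7_general Adj x hflow hbal
end

section
/- If K₁ and K₂ are subsets of C each attaining the maximum ratio α̂ = max_{∅ ⊂ K ⊆ C} |K|/|N(K)| with equality |K_i| = α̂·|N(K_i)|, then K₁ ∪ K₂ also satisfies |K₁ ∪ K₂| = α̂·|N(K₁ ∪ K₂)|. In other words, the family of tight sets is closed under union. -/
open scoped Classical

/-!
Tightness of `K₁ ∪ K₂` follows from a one-line exchange argument: `K ↦ |K|` is modular and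
`K ↦ |N(K)|` is submodular, so
`|K₁ ∪ K₂| + |K₁ ∩ K₂| = α̂ (|N(K₁)| + |N(K₂)|) ≥ α̂ (|N(K₁ ∪ K₂)| + |N(K₁ ∩ K₂)|)`,
and since `|K₁ ∩ K₂| ≤ α̂ |N(K₁ ∩ K₂)|`, the union satisfies `|K₁ ∪ K₂| ≥ α̂ |N(K₁ ∪ K₂)|`.
-/

open Finset

section Neighborhood

variable {C S : Type*} [Fintype S] (Adj : C → S → Prop)

theorem NB_mono {K L : Finset C} (h : K ⊆ L) : NB Adj K ⊆ NB Adj L :=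
  monotone_filter_right _ fun _ _ ⟨c, hc, hcs⟩ => ⟨c, h hc, hcs⟩

variable [DecidableEq C] (K₁ K₂ : Finset C)

theorem NB_union : NB Adj (K₁ ∪ K₂) = NB Adj K₁ ∪ NB Adj K₂ := by
  simp only [NB, ← filter_or, mem_union, or_and_right, exists_or]

theorem NB_inter_subset : NB Adj (K₁ ∩ K₂) ⊆ NB Adj K₁ ∩ NB Adj K₂ :=
  subset_inter (NB_mono Adj inter_subset_left) (NB_mono Adj inter_subset_right)

theorem card_NB_union_add_card_NB_inter_le :
    #(NB Adj (K₁ ∪ K₂)) + #(NB Adj (K₁ ∩ K₂)) ≤ #(NB Adj K₁) + #(NB Adj K₂) := by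
  rw [NB_union, ← card_union_add_card_inter (NB Adj K₁)]
  gcongr
  exact NB_inter_subset Adj K₁ K₂

end Neighborhood

theorem nonneg_of_card_le_mul {C : Type*} {K : Finset C} (hK : K.Nonempty) {a : ℝ} {n : ℕ}
    (h : (#K : ℝ) ≤ a * n) : 0 ≤ a := by
  have : (1 : ℝ) ≤ #K := by exact_mod_cast hK.card_pos
  by_contra! ha
  nlinarith [(n.cast_nonneg : (0 : ℝ) ≤ n)]

theorem card_union_eq_mul_of_submodular {C : Type*} [DecidableEq C] (f : Finset C → ℕ)
    {a : ℝ} (ha : 0 ≤ a) (hub : ∀ K : Finset C, (#K : ℝ) ≤ a * f K) {K₁ K₂ : Finset C}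
    (hf : f (K₁ ∪ K₂) + f (K₁ ∩ K₂) ≤ f K₁ + f K₂)
    (h₁ : (#K₁ : ℝ) = a * f K₁) (h₂ : (#K₂ : ℝ) = a * f K₂) :
    (#(K₁ ∪ K₂) : ℝ) = a * f (K₁ ∪ K₂) := by
  have hcard : (#(K₁ ∪ K₂) : ℝ) + #(K₁ ∩ K₂) = #K₁ + #K₂ := by
    exact_mod_cast card_union_add_card_inter K₁ K₂
  have hf' : a * (f (K₁ ∪ K₂) + f (K₁ ∩ K₂)) ≤ a * (f K₁ + f K₂) :=
    mul_le_mul_of_nonneg_left (by exact_mod_cast hf) ha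
  linarith [hub (K₁ ∪ K₂), hub (K₁ ∩ K₂)]

theorem stmt_8_general {C S : Type*} [Fintype S] [DecidableEq C] [Nonempty C]
    (Adj : C → S → Prop)
    (ahat : ℝ)
    (hub : ∀ K : Finset C, (K.card : ℝ) ≤ ahat * ((NB Adj K).card : ℝ))
    (K₁ K₂ : Finset C)
    (h₁ : (K₁.card : ℝ) = ahat * ((NB Adj K₁).card : ℝ))
    (h₂ : (K₂.card : ℝ) = ahat * ((NB Adj K₂).card : ℝ)) :
    ((K₁ ∪ K₂).card : ℝ) = ahat * ((NB Adj (K₁ ∪ K₂)).card : ℝ) := by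
  obtain ⟨c⟩ := ‹Nonempty C›
  have hpos : 0 ≤ ahat := nonneg_of_card_le_mul (singleton_nonempty c) (hub {c})
  exact card_union_eq_mul_of_submodular (fun K => #(NB Adj K)) hpos hub
    (card_NB_union_add_card_NB_inter_le Adj K₁ K₂) h₁ h₂

/-- Tight sets are closed under union: if `|K| ≤ α̂·|N(K)|` for all `K` and
`|K₁| = α̂·|N(K₁)|`, `|K₂| = α̂·|N(K₂)|`, then `|K₁ ∪ K₂| = α̂·|N(K₁ ∪ K₂)|`. -/
theorem stmt_8 {C S : Type*} [Fintype C] [Fintype S] [DecidableEq C] [Nonempty C]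
    (Adj : C → S → Prop)
    (hnb : ∀ c : C, ∃ s, Adj c s)
    (ahat : ℝ)
    (hub : ∀ K : Finset C, (K.card : ℝ) ≤ ahat * ((NB Adj K).card : ℝ))
    (K₁ K₂ : Finset C)
    (h₁ : (K₁.card : ℝ) = ahat * ((NB Adj K₁).card : ℝ))
    (h₂ : (K₂.card : ℝ) = ahat * ((NB Adj K₂).card : ℝ)) :
    ((K₁ ∪ K₂).card : ℝ) = ahat * ((NB Adj (K₁ ∪ K₂)).card : ℝ) :=
  stmt_8_general Adj ahat hub K₁ K₂ h₁ h₂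
end

section
/- A bipartite graph G = (C ∪ S, E) in which every client has at least one neighbor contains a matching saturating all of C if and only if every server load in the unique balanced server flow satisfies α(s) ≤ 1. -/
/-
If `m` saturates `C`, let `T` be the servers of maximal load `M`. By balance, a client sending
flow into `T` has all its neighbours in `T`, in particular `m c ∈ T`; so the flow into `T`,
which is `M |T|`, comes from at most `|T|` clients, each sending at most one unit, and `M ≤ 1`.
Conversely, if all loads are at most one, the `|K|` units sent by a set of clients `K` all land
in `N(K)`, so `|K| ≤ |N(K)|` and Hall's theorem gives the matching.
-/

open scoped Classical

open Finset

section

variable {C S : Type*} {Adj : C → S → Prop} {x : C → S → ℝ}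

theorem sum_load_eq_sum_sum [Fintype C] (x : C → S → ℝ) (T : Finset S) :
    ∑ s ∈ T, load x s = ∑ c, ∑ s ∈ T, x c s :=
  Finset.sum_comm

namespace IsServerFlow

theorem sum_le_one [Fintype S] (hx : IsServerFlow Adj x) (c : C) (T : Finset S) :
    ∑ s ∈ T, x c s ≤ 1 :=
  hx.2.2 c ▸ sum_le_sum_of_subset_of_nonneg (subset_univ T) fun s _ _ => hx.1 c s

theorem sum_eq_one_of_adj_subset [Fintype S] (hx : IsServerFlow Adj x) {c : C} {T : Finset S}
    (hT : ∀ s, Adj c s → s ∈ T) : ∑ s ∈ T, x c s = 1 :=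
  hx.2.2 c ▸ sum_subset (subset_univ T) fun s _ hs => hx.2.1 c s (mt (hT s) hs)

theorem card_le_sum_load [Fintype C] [Fintype S] (hx : IsServerFlow Adj x) (K : Finset C) :
    (#K : ℝ) ≤ ∑ s ∈ K.biUnion (fun c => univ.filter (Adj c)), load x s := by
  set N := K.biUnion fun c => univ.filter (Adj c)
  have hN : ∀ c ∈ K, ∀ s, Adj c s → s ∈ N := fun c hc s hs =>
    mem_biUnion.mpr ⟨c, hc, by simpa using hs⟩
  calc (#K : ℝ) = ∑ c ∈ K, ∑ s ∈ N, x c s := by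
        rw [sum_congr rfl fun c hc => hx.sum_eq_one_of_adj_subset (hN c hc)]
        simp
    _ ≤ ∑ c, ∑ s ∈ N, x c s :=
        sum_le_sum_of_subset_of_nonneg (subset_univ K) fun c _ _ =>
          sum_nonneg fun s _ => hx.1 c s
    _ = ∑ s ∈ N, load x s := (sum_load_eq_sum_sum x N).symm

theorem exists_saturating_of_load_le_one [Fintype C] [Fintype S] (hx : IsServerFlow Adj x)
    (hle : ∀ s, load x s ≤ 1) :
    ∃ m : C → S, Function.Injective m ∧ ∀ c, Adj c (m c) := by
  have hall : ∀ K : Finset C, #K ≤ #(K.biUnion fun c => univ.filter (Adj c)) := by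
    intro K
    have := (hx.card_le_sum_load K).trans (sum_le_sum fun s _ => hle s)
    exact_mod_cast (by simpa using this)
  obtain ⟨m, hm, hmN⟩ := (all_card_le_biUnion_card_iff_exists_injective _).mp hall
  exact ⟨m, hm, fun c => (mem_filter.mp (hmN c)).2⟩

theorem load_le_one_of_saturating [Fintype C] [Fintype S] (hx : IsServerFlow Adj x)
    (hbal : IsBalanced Adj x) {m : C → S} (hm : Function.Injective m)
    (hmAdj : ∀ c, Adj c (m c)) (s : S) :
    load x s ≤ 1 := by
  obtain ⟨s₀, -, hs₀⟩ := exists_max_image univ (load x) ⟨s, mem_univ s⟩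
  set M := load x s₀
  set T := univ.filter fun t => load x t = M
  have hT : 0 < #T := card_pos.mpr ⟨s₀, by simp [T, M]⟩
  have hclient : ∀ c, ∑ t ∈ T, x c t ≤ if m c ∈ T then 1 else 0 := by
    intro c
    split_ifs with hc
    · exact hx.sum_le_one c T
    · refine (sum_eq_zero fun t ht => ?_).le
      by_contra hxt
      have hmax : M ≤ load x (m c) :=
        (mem_filter.mp ht).2 ▸ hbal c t ((hx.1 c t).lt_of_ne' hxt) (m c) (hmAdj c)
      exact hc (mem_filter.mpr ⟨mem_univ _, le_antisymm (hs₀ _ (mem_univ _)) hmax⟩)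
  have hmatched : #(univ.filter fun c => m c ∈ T) ≤ #T :=
    card_le_card_of_injOn m (fun c hc => (mem_filter.mp hc).2) hm.injOn
  have hMT : M * #T ≤ #T :=
    calc M * #T = ∑ t ∈ T, load x t := by
          rw [sum_congr rfl fun t ht => (mem_filter.mp ht).2, sum_const, nsmul_eq_mul, mul_comm]
      _ = ∑ c, ∑ t ∈ T, x c t := sum_load_eq_sum_sum x T
      _ ≤ ∑ c, if m c ∈ T then (1 : ℝ) else 0 := sum_le_sum fun c _ => hclient c
      _ = #(univ.filter fun c => m c ∈ T) := by simp
      _ ≤ #T := by exact_mod_cast hmatched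
  exact (hs₀ s (mem_univ s)).trans ((mul_le_iff_le_one_left (by exact_mod_cast hT)).mp hMT)

end IsServerFlow

end

theorem stmt_12_general {C S : Type*} [Fintype C] [Fintype S]
    (Adj : C → S → Prop)
    (x : C → S → ℝ)
    (hflow : IsServerFlow Adj x) (hbal : IsBalanced Adj x) :
    (∃ m : C → S, Function.Injective m ∧ ∀ c, Adj c (m c)) ↔ (∀ s, load x s ≤ 1) :=
  ⟨fun ⟨_, hm, hmAdj⟩ => hflow.load_le_one_of_saturating hbal hm hmAdj,
    hflow.exists_saturating_of_load_le_one⟩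

/-- A bipartite graph in which every client has a neighbor contains a matching
saturating all clients if and only if every balanced server load is at most `1`. -/
theorem stmt_12 {C S : Type*} [Fintype C] [Fintype S] [Nonempty C]
    (Adj : C → S → Prop)
    (hnb : ∀ c : C, ∃ s, Adj c s)
    (x : C → S → ℝ)
    (hflow : IsServerFlow Adj x) (hbal : IsBalanced Adj x) :
    (∃ m : C → S, Function.Injective m ∧ ∀ c, Adj c (m c)) ↔ (∀ s, load x s ≤ 1) :=
  stmt_12_general Adj x hflow hbal
end

section
/- Lower bound construction for exact load balancing: for every positive integer L divisible by 4 there exists a bipartite graph G = (C ∪ S, E) with |C| = L², |S| = L, and opt(G) = L (minimum possible maximum server load is L), together with an insertion order of the clients, such that any algorithm maintaining at all times an assignment of the currently present clients to neighboring servers of minimum possible maximum load must make Ω(L³) total changes to the assignment. In particular, in the path-structured graph where block C_i of clients connects to servers s_i and s_{i+1} (block C_L only to s_L), after each up-heavy epoch the unique optimal assignment assigns all of C_i to s_i, and after each down-heavy epoch there is again a unique optimal assignment, forcing Ω(L²) reassignments per epoch over L/2 epochs. -/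
/-! With `L = 2m` servers on a path, an assignment of the first `2m·n` clients with maximum load
`n` is pinned down: the clients of blocks `0, …, i` can only use servers `0, …, i + 1`, and
servers `0, …, i` hold exactly `(i + 1)·n` of them, so the number of block-`i` clients on server
`i + 1` is forced. After a down-heavy epoch it is `i + 1` for every block `i < m`; after the next
up-heavy epoch it is `0` again. Clients never leave, so `1 + 2 + ⋯ + m` clients are reassigned
during each of the `m / 2` up-heavy epochs, `Ω(L³)` changes in total. -/

/-- `optLoad L t Adj` : the minimum possible maximum server load over assignments of
the first `t` clients (those with index `< t`) to neighboring servers. -/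
noncomputable def optLoad (L t : ℕ) (Adj : Fin (L ^ 2) → Fin L → Prop) : ℕ :=
  sInf {B : ℕ | ∃ A : Fin (L ^ 2) → Fin L,
    (∀ c : Fin (L ^ 2), (c : ℕ) < t → Adj c (A c)) ∧
    ∀ s : Fin L,
      (Finset.univ.filter fun c : Fin (L ^ 2) => (c : ℕ) < t ∧ A c = s).card ≤ B}

open Finset

theorem card_fin_filter_val_lt_and {N T : ℕ} (hT : T ≤ N) (p : ℕ → Prop) [DecidablePred p] :
    #{c : Fin N | (c : ℕ) < T ∧ p c} = #{c ∈ range T | p c} := by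
  refine card_bij (fun c _ => c.val) (fun c hc => by simpa using hc)
    (fun _ _ _ _ => Fin.ext) fun c hc => ?_
  simp only [mem_filter, mem_range] at hc
  exact ⟨⟨c, by omega⟩, by simpa using hc, rfl⟩

theorem card_filter_range_mul_div_mod (L n : ℕ) (p : ℕ → ℕ → Prop)
    [∀ q r, Decidable (p q r)] :
    #{c ∈ range (L * n) | p (c / L) (c % L)} = ∑ q ∈ range n, #{r ∈ range L | p q r} := by
  induction n with
  | zero => simp
  | succ n ih =>
    rw [Nat.mul_succ, card_filter, sum_range_add, ← card_filter, ih, sum_range_succ, card_filter]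
    congr 1
    refine sum_congr rfl fun r hr => ?_
    have hr : r < L := mem_range.mp hr
    rw [Nat.mul_add_div (by omega), Nat.div_eq_of_lt hr, Nat.mul_add_mod, Nat.mod_eq_of_lt hr,
      add_zero]

section Counting

variable {α : Type*}

theorem card_filter_val_le_eq_of_load_le {L B : ℕ} (P : Finset α) (f : α → Fin L)
    (hload : ∀ s, #{c ∈ P | f c = s} ≤ B) (hP : #P = L * B) {i : ℕ} (hi : i < L) :
    #{c ∈ P | (f c : ℕ) ≤ i} = (i + 1) * B := by
  have fiber : ∀ s < L, ∀ Q ⊆ P, #{c ∈ Q | (f c : ℕ) = s} ≤ B := by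
    intro s hs Q hQ
    refine (card_le_card fun c hc => ?_).trans (hload ⟨s, hs⟩)
    simp only [mem_filter] at hc ⊢
    exact ⟨hQ hc.1, Fin.ext hc.2⟩
  have low : #{c ∈ P | (f c : ℕ) ≤ i} ≤ B * #(range (i + 1)) :=
    card_le_mul_card_image_of_maps_to (fun c hc => mem_range.2 (by grind)) B
      fun s hs => fiber s (by grind) _ (filter_subset _ _)
  have high : #{c ∈ P | ¬ (f c : ℕ) ≤ i} ≤ B * #(Ico (i + 1) L) :=
    card_le_mul_card_image_of_maps_to
      (fun c hc => mem_Ico.2 ⟨by grind, (f c).isLt⟩) B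
      fun s hs => fiber s (mem_Ico.1 hs).2 _ (filter_subset _ _)
  have total := card_filter_add_card_filter_not (s := P) (fun c => (f c : ℕ) ≤ i)
  rw [card_range] at low
  rw [Nat.card_Ico] at high
  have split : B * (i + 1) + B * (L - (i + 1)) = L * B := by
    rw [← mul_add, mul_comm]; congr 1; omega
  rw [mul_comm]
  omega

theorem card_filter_le_eq_add_card_filter_shift (P : Finset α) (b f : α → ℕ)
    (hf : ∀ c ∈ P, f c = b c ∨ f c = b c + 1) (i : ℕ) :
    #{c ∈ P | b c ≤ i} = #{c ∈ P | f c ≤ i} + #{c ∈ P | b c = i ∧ f c = i + 1} := by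
  rw [← card_filter_add_card_filter_not (s := {c ∈ P | b c ≤ i}) (f · ≤ i), filter_filter,
    filter_filter]
  congr 2
  · exact filter_congr fun c hc => by have := hf c hc; omega
  · exact filter_congr fun c hc => by have := hf c hc; omega

theorem card_filter_eq_of_card_filter_le {L n : ℕ} (P : Finset α) (f : α → ℕ)
    (h : ∀ s < L, #{c ∈ P | f c ≤ s} = (s + 1) * n) {s : ℕ} (hs : s < L) :
    #{c ∈ P | f c = s} = n := by
  cases s with
  | zero => simpa [Nat.le_zero] using h 0 hs
  | succ s =>
    have split := card_filter_add_card_filter_not (s := {c ∈ P | f c ≤ s + 1}) (f · ≤ s)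
    have below : {c ∈ {c ∈ P | f c ≤ s + 1} | f c ≤ s} = {c ∈ P | f c ≤ s} := by
      rw [filter_filter]; exact filter_congr fun _ _ => by omega
    have top : {c ∈ {c ∈ P | f c ≤ s + 1} | ¬f c ≤ s} = {c ∈ P | f c = s + 1} := by
      rw [filter_filter]; exact filter_congr fun _ _ => by omega
    rw [below, top, h (s + 1) hs, h s (by omega)] at split
    linarith

theorem card_filter_le_add_sum_card_ne [Fintype α] {β : Type*} [DecidableEq β] (w : α → ℕ)
    (A : ℕ → α → β) (Q : α → β → Prop) [∀ c b, Decidable (Q c b)] {a b : ℕ}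
    (hab : a ≤ b) :
    #{c | w c < a ∧ Q c (A a c)} ≤ #{c | w c < b ∧ Q c (A b c)} +
      ∑ t ∈ Ico a b, #{c | w c < t ∧ A t c ≠ A (t + 1) c} := by
  classical
  induction b, hab using Nat.le_induction with
  | base => simp
  | succ b hab ih =>
    have step : #{c | w c < b ∧ Q c (A b c)} ≤
        #{c | w c < b + 1 ∧ Q c (A (b + 1) c)} + #{c | w c < b ∧ A b c ≠ A (b + 1) c} := by
      refine (card_le_card fun c hc => ?_).trans (card_union_le _ _)
      simp only [mem_filter, mem_univ, true_and, mem_union] at hc ⊢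
      by_cases hA : A b c = A (b + 1) c
      · exact .inl ⟨by omega, hA ▸ hc.2⟩
      · exact .inr ⟨hc.1, hA⟩
    rw [sum_Ico_succ_top hab]
    omega

end Counting

theorem mul_le_sum_range_of_le_sum_Ico {g : ℕ → ℕ} (hg : Monotone g) (f : ℕ → ℕ)
    {C k : ℕ} (h : ∀ u < k, C ≤ ∑ t ∈ Ico (g (2 * u + 1)) (g (2 * u + 2)), f t) :
    k * C ≤ ∑ t ∈ range (g (2 * k)), f t := by
  induction k with
  | zero => simp
  | succ k ih =>
    have mono := sum_le_sum_of_subset (f := f)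
      (range_subset_range.2 (hg (show 2 * k ≤ 2 * k + 1 by omega)))
    rw [show 2 * (k + 1) = 2 * k + 2 by ring,
      ← sum_range_add_sum_Ico _ (hg (show 2 * k + 1 ≤ 2 * k + 2 by omega))]
    have last := h k (by omega)
    have earlier := ih fun u hu => h u (by omega)
    rw [add_one_mul]
    omega

theorem le_optLoad_mul {L t : ℕ} {Adj : Fin (L ^ 2) → Fin L → Prop} (ht : t ≤ L ^ 2)
    (hne : ∃ A : Fin (L ^ 2) → Fin L, ∀ c : Fin (L ^ 2), (c : ℕ) < t → Adj c (A c)) :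
    t ≤ optLoad L t Adj * L := by
  obtain ⟨A₀, hA₀⟩ := hne
  obtain ⟨A, -, hload⟩ : optLoad L t Adj ∈ _ :=
    Nat.sInf_mem ⟨L ^ 2, A₀, hA₀, fun s => (card_le_univ _).trans (by simp)⟩
  calc t = #{c : Fin (L ^ 2) | (c : ℕ) < t} := by simp [Fin.card_filter_val_lt, ht]
    _ ≤ optLoad L t Adj * #(univ : Finset (Fin L)) :=
      card_le_mul_card_image_of_maps_to (fun _ _ => mem_univ _) _ fun s _ => by
        rw [filter_filter]; exact hload s
    _ = optLoad L t Adj * L := by simp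

namespace PathInstance

variable {m : ℕ}

/-- Client `c` arrives in round `c / (2m)` at position `c % (2m)`. Each of the first `m` rounds
puts one client into every block; afterwards the rounds alternate between down-heavy (two clients
into each of the blocks `0, …, m - 1`) and up-heavy (two into each of `m, …, 2m - 1`). -/
def roundBlock (m q r : ℕ) : ℕ :=
  if q < m then r else if (q - m) % 2 = 0 then r / 2 else m + r / 2

def block (m c : ℕ) : ℕ := roundBlock m (c / (2 * m)) (c % (2 * m))

/-- The number of block-`i` clients that every assignment of the first `2m·n` clients with
maximum load `n` puts on server `i + 1`. For `n < m` the truncated `n - m` is `0`. -/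
def overflow (m n i : ℕ) : ℕ :=
  if (n - m) % 2 = 1 then (if i < m then i + 1 else 2 * m - 1 - i) else 0

/-- Server `2m` does not exist, so the last block is adjacent to its own server only. -/
def adj (m : ℕ) (c : Fin ((2 * m) ^ 2)) (s : Fin (2 * m)) : Prop :=
  (s : ℕ) = block m c ∨ (s : ℕ) = block m c + 1

theorem block_lt (hm : 0 < m) (c : ℕ) : block m c < 2 * m := by
  have := Nat.mod_lt c (show 0 < 2 * m by omega)
  unfold block roundBlock
  split_ifs <;> omega

theorem overflow_le (n i : ℕ) : overflow m n i ≤ m := by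
  unfold overflow; split_ifs <;> omega

theorem overflow_pos {n i : ℕ} (h : 0 < overflow m n i) (hi : i < 2 * m) : i + 1 < 2 * m := by
  unfold overflow at h; split_ifs at h <;> omega

theorem card_block_le {i : ℕ} (hi : i < 2 * m) (n : ℕ) :
    #{c ∈ range (2 * m * n) | block m c ≤ i} = (i + 1) * n + overflow m n i := by
  unfold block
  rw [card_filter_range_mul_div_mod (2 * m) n (fun q r => roundBlock m q r ≤ i)]
  induction n with
  | zero => simp [overflow]
  | succ n ih =>
    have round : {r ∈ range (2 * m) | roundBlock m n r ≤ i} = range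
        (if n < m then i + 1 else if (n - m) % 2 = 0 then min (2 * m) (2 * i + 2)
          else 2 * (i + 1) - 2 * m) := by
      ext r; rw [mem_filter, mem_range, mem_range, roundBlock]
      split_ifs <;> omega
    rw [sum_range_succ, ih, round, card_range, mul_add_one (i + 1) n]
    unfold overflow
    split_ifs <;> omega

theorem card_block_eq_and_lt_overflow {n i : ℕ} (hn : m ≤ n) (hi : i < 2 * m) :
    #{c ∈ range (2 * m * n) | block m c = i ∧ c / (2 * m) < overflow m n i} =
      overflow m n i := by
  unfold block
  rw [card_filter_range_mul_div_mod (2 * m) n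
    (fun q r => roundBlock m q r = i ∧ q < overflow m n i)]
  have round : ∀ q, #{r ∈ range (2 * m) | roundBlock m q r = i ∧ q < overflow m n i} =
      if q < overflow m n i then 1 else 0 := by
    intro q
    have := overflow_le (m := m) n i
    split_ifs with hq
    · rw [← card_singleton i]
      congr 1; ext r; rw [mem_filter, mem_range, mem_singleton, roundBlock]
      split_ifs <;> omega
    · simp [hq]
  simp only [round, ← card_filter]
  have := overflow_le (m := m) n i
  rw [show {q ∈ range n | q < overflow m n i} = range (overflow m n i) by
    ext q; simp only [mem_filter, mem_range]; omega, card_range]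

def witness (m n c : ℕ) : ℕ :=
  block m c + if c / (2 * m) < overflow m n (block m c) then 1 else 0

theorem witness_lt (hm : 0 < m) (n c : ℕ) : witness m n c < 2 * m := by
  have := block_lt hm c
  unfold witness
  split_ifs with h
  · exact overflow_pos (Nat.zero_lt_of_lt h) this
  · omega

theorem card_witness_le {n s : ℕ} (hn : m ≤ n) (hs : s < 2 * m) :
    #{c ∈ range (2 * m * n) | witness m n c ≤ s} = (s + 1) * n := by
  have shift := card_filter_le_eq_add_card_filter_shift (range (2 * m * n)) (block m)
    (witness m n) (fun c _ => by unfold witness; split_ifs <;> simp) s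
  have pushed : {c ∈ range (2 * m * n) | block m c = s ∧ witness m n c = s + 1} =
      {c ∈ range (2 * m * n) | block m c = s ∧ c / (2 * m) < overflow m n s} :=
    filter_congr fun c _ => by
      by_cases hb : block m c = s
      · simp only [witness, hb, true_and]; split_ifs <;> omega
      · simp [hb]
  rw [card_block_le hs, pushed, card_block_eq_and_lt_overflow hn hs] at shift
  omega

theorem exists_assignment_load_le (hm : 0 < m) {n : ℕ} (hn : m ≤ n) (hn2 : n ≤ 2 * m) :
    ∃ A : Fin ((2 * m) ^ 2) → Fin (2 * m),
      (∀ c : Fin ((2 * m) ^ 2), (c : ℕ) < 2 * m * n → adj m c (A c)) ∧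
      ∀ s, #{c : Fin ((2 * m) ^ 2) | (c : ℕ) < 2 * m * n ∧ A c = s} ≤ n := by
  refine ⟨fun c => ⟨witness m n c, witness_lt hm n c⟩, fun c _ => ?_, fun s => ?_⟩
  · simp only [adj, witness]; split_ifs <;> simp
  · have hT : 2 * m * n ≤ (2 * m) ^ 2 := by rw [sq]; exact Nat.mul_le_mul_left _ hn2
    simp only [Fin.ext_iff]
    rw [card_fin_filter_val_lt_and hT (fun c => witness m n c = s),
      card_filter_eq_of_card_filter_le _ _ (fun s hs => card_witness_le hn hs) s.isLt]

theorem optLoad_boundary_le (hm : 0 < m) {n : ℕ} (hn : m ≤ n) (hn2 : n ≤ 2 * m) :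
    optLoad (2 * m) (2 * m * n) (adj m) ≤ n :=
  Nat.sInf_le (exists_assignment_load_le hm hn hn2)

theorem optLoad_adj (hm : 0 < m) : optLoad (2 * m) ((2 * m) ^ 2) (adj m) = 2 * m := by
  obtain ⟨A, hA, -⟩ := exists_assignment_load_le hm (n := 2 * m) (by omega) le_rfl
  rw [← sq] at hA
  refine le_antisymm (sq (2 * m) ▸ optLoad_boundary_le hm (by omega) le_rfl) ?_
  exact Nat.le_of_mul_le_mul_right
    ((sq (2 * m)).symm.trans_le (le_optLoad_mul le_rfl ⟨A, hA⟩)) (by omega)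

theorem card_shifted_block_eq_overflow {n : ℕ} (A : Fin ((2 * m) ^ 2) → Fin (2 * m))
    (hadj : ∀ c : Fin ((2 * m) ^ 2), (c : ℕ) < 2 * m * n → adj m c (A c))
    (hload : ∀ s, #{c : Fin ((2 * m) ^ 2) | (c : ℕ) < 2 * m * n ∧ A c = s} ≤ n)
    (hn2 : n ≤ 2 * m) {i : ℕ} (hi : i < 2 * m) :
    #{c : Fin ((2 * m) ^ 2) | (c : ℕ) < 2 * m * n ∧ block m c = i ∧ (A c : ℕ) = i + 1} =
      overflow m n i := by
  have hT : 2 * m * n ≤ (2 * m) ^ 2 := by rw [sq]; exact Nat.mul_le_mul_left _ hn2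
  set P : Finset (Fin ((2 * m) ^ 2)) := {c | (c : ℕ) < 2 * m * n}
  have hP : #P = 2 * m * n := by simp [P, Fin.card_filter_val_lt, hT]
  have servers := card_filter_val_le_eq_of_load_le P A
    (fun s => by rw [filter_filter]; exact hload s) hP hi
  have shift := card_filter_le_eq_add_card_filter_shift P (fun c => block m c) (A ·)
    (fun c hc => hadj c (mem_filter.1 hc).2) i
  have blocks := card_block_le hi n
  simp only [P, filter_filter] at servers shift
  rw [← card_fin_filter_val_lt_and hT] at blocks
  omega

theorem card_shifted_lower_eq_sum_overflow {n : ℕ} (A : Fin ((2 * m) ^ 2) → Fin (2 * m))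
    (hadj : ∀ c : Fin ((2 * m) ^ 2), (c : ℕ) < 2 * m * n → adj m c (A c))
    (hload : ∀ s, #{c : Fin ((2 * m) ^ 2) | (c : ℕ) < 2 * m * n ∧ A c = s} ≤ n)
    (hn2 : n ≤ 2 * m) :
    #{c : Fin ((2 * m) ^ 2) |
        (c : ℕ) < 2 * m * n ∧ block m c < m ∧ (A c : ℕ) = block m c + 1} =
      ∑ i ∈ range m, overflow m n i := by
  rw [card_eq_sum_card_fiberwise (f := fun c : Fin ((2 * m) ^ 2) => block m c) (t := range m)
    fun c hc => mem_range.2 (mem_filter.1 hc).2.2.1]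
  refine sum_congr rfl fun i hi => ?_
  have hi : i < m := mem_range.1 hi
  rw [filter_filter, ← card_shifted_block_eq_overflow A hadj hload hn2 (i := i) (by omega)]
  congr 1
  exact filter_congr fun c _ => by constructor <;> rintro ⟨h1, h2, h3⟩ <;> omega

theorem sum_le_sum_card_ne_of_odd (hm : 0 < m) {n : ℕ} (hn : m ≤ n) (hn2 : n + 1 ≤ 2 * m)
    (hodd : (n - m) % 2 = 1) (A : ℕ → Fin ((2 * m) ^ 2) → Fin (2 * m))
    (hadj : ∀ t, ∀ c : Fin ((2 * m) ^ 2), (c : ℕ) < t → adj m c (A t c))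
    (hopt : ∀ t ≤ (2 * m) ^ 2, ∀ s : Fin (2 * m),
      #{c : Fin ((2 * m) ^ 2) | (c : ℕ) < t ∧ A t c = s} ≤ optLoad (2 * m) t (adj m)) :
    ∑ i ∈ range m, (i + 1) ≤ ∑ t ∈ Ico (2 * m * n) (2 * m * (n + 1)),
      #{c : Fin ((2 * m) ^ 2) | (c : ℕ) < t ∧ A t c ≠ A (t + 1) c} := by
  have shifted : ∀ n', m ≤ n' → n' ≤ 2 * m →
      #{c : Fin ((2 * m) ^ 2) | (c : ℕ) < 2 * m * n' ∧
        block m c < m ∧ (A (2 * m * n') c : ℕ) = block m c + 1} =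
      ∑ i ∈ range m, overflow m n' i := fun n' hn' hn'2 => by
    have hT : 2 * m * n' ≤ (2 * m) ^ 2 := by rw [sq]; exact Nat.mul_le_mul_left _ hn'2
    exact card_shifted_lower_eq_sum_overflow _ (hadj _)
      (fun s => (hopt _ hT s).trans (optLoad_boundary_le hm hn' hn'2)) hn'2
  have changes := card_filter_le_add_sum_card_ne (fun c : Fin ((2 * m) ^ 2) => (c : ℕ)) A
    (fun c s => block m c < m ∧ (s : ℕ) = block m c + 1)
    (Nat.mul_le_mul_left (2 * m) (Nat.le_add_right n 1))
  rw [shifted n hn (by omega), shifted (n + 1) (by omega) hn2] at changes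
  have before : ∑ i ∈ range m, overflow m n i = ∑ i ∈ range m, (i + 1) :=
    sum_congr rfl fun i hi => by simp [overflow, hodd, mem_range.1 hi]
  have after : ∑ i ∈ range m, overflow m (n + 1) i = 0 :=
    sum_eq_zero fun i _ => by rw [overflow, if_neg (by omega)]
  omega

end PathInstance

/-- Lower bound for exact online load balancing: there is a constant `a > 0` such that
for every positive `L` divisible by `4` there is a bipartite graph with `L²` clients
and `L` servers, of optimum maximum load `L`, and an insertion order of the clients
(here: by increasing index), such that any algorithm maintaining at every time an
assignment of the present clients to neighboring servers whose maximum load equals the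
current optimum must make at least `a·L³` reassignments in total. -/
theorem stmt_19 :
    ∃ a : ℝ, 0 < a ∧
      ∀ L : ℕ, 0 < L → 4 ∣ L →
        ∃ Adj : Fin (L ^ 2) → Fin L → Prop,
          optLoad L (L ^ 2) Adj = L ∧
          ∀ A : ℕ → Fin (L ^ 2) → Fin L,
            (∀ t, ∀ c : Fin (L ^ 2), (c : ℕ) < t → Adj c (A t c)) →
            (∀ t ≤ L ^ 2, ∀ s : Fin L,
              (Finset.univ.filter fun c : Fin (L ^ 2) =>
                (c : ℕ) < t ∧ A t c = s).card ≤ optLoad L t Adj) →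
            a * (L : ℝ) ^ 3 ≤
              ∑ t ∈ Finset.range (L ^ 2),
                ((Finset.univ.filter fun c : Fin (L ^ 2) =>
                  (c : ℕ) < t ∧ A t c ≠ A (t + 1) c).card : ℝ) := by
  -- `k` up-heavy epochs, each forcing `1 + ⋯ + 2k = k(2k + 1)` changes, and `k²(2k + 1) ≥ L³/32`
  refine ⟨1 / 32, by norm_num, fun L hL hL4 => ?_⟩
  obtain ⟨k, rfl⟩ : ∃ k, L = 2 * (2 * k) := ⟨L / 4, by omega⟩
  have hm : 0 < 2 * k := by omega
  refine ⟨PathInstance.adj (2 * k), PathInstance.optLoad_adj hm, fun A hadj hopt => ?_⟩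
  have total := mul_le_sum_range_of_le_sum_Ico (g := fun e => 2 * (2 * k) * (2 * k + e))
    (fun a b hab => by dsimp only; gcongr) _ (k := k) fun u hu =>
      PathInstance.sum_le_sum_card_ne_of_odd hm (n := 2 * k + (2 * u + 1)) (by omega) (by omega)
        (by omega) A hadj hopt
  have gauss := sum_range_id_mul_two (2 * k + 1)
  rw [sum_range_succ', add_zero, Nat.add_sub_cancel] at gauss
  have hS : ∑ i ∈ range (2 * k), (i + 1) = k * (2 * k + 1) :=
    Nat.eq_of_mul_eq_mul_right two_pos (gauss.trans (by ring))
  rw [hS, show 2 * (2 * k) * (2 * k + 2 * k) = (2 * (2 * k)) ^ 2 by ring] at total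
  rw [← Nat.cast_sum]
  refine le_trans ?_ (Nat.cast_le.2 total)
  push_cast
  nlinarith [sq_nonneg (k : ℝ)]
end
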